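/- arXiv:1501.06242 — 2 statements merged into one kernel-verified Lean document; each statement's English description precedes it below -/
import Mathlib

section
/- Let N ≥ 2 and for α ∈ (0,1) define c_{N,α} = (∫_{ℝ^N} (1 - cos z₁)/|z|^{N+2α} dz)^{-1}, where z = (z₁,…,z_N). Then lim_{α→1⁻} c_{N,α}/(1-α) = 4N/|S^{N-1}|, where |S^{N-1}| is the (N-1)-dimensional surface measure of the unit sphere in ℝ^N. -/
open MeasureTheory Metric Filter Real Set Topology

/-!
Near the origin `1 - cos z₁ = z₁² / 2 + O(z₁⁴)`, and away from it the integrand is bounded by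
`2 ‖z‖^(-N-2α)`; both error terms stay integrable uniformly in `α ∈ [1/2, 1)`, so the integral is
`∫_{B₁} z₁² / (2 ‖z‖^(N+2α)) + O(1)`. By symmetry in the coordinates, `∫_{B₁} z₁² ‖z‖^(-p)` is
`1/N` of the radial integral `∫_{B₁} ‖z‖^(2-p) = N |B₁| / (N + 2 - p)`, so the integral equals
`|B₁| / (4 (1 - α)) + O(1)`, and `|S^{N-1}| = N |B₁|`.
-/

section Radial

variable {E : Type*} [NormedAddCommGroup E] [NormedSpace ℝ E] [FiniteDimensional ℝ E]
  [MeasurableSpace E] [BorelSpace E] [Nontrivial E] (μ : Measure E) [μ.IsAddHaarMeasure]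

lemma integrableOn_ball_rpow_norm {s : ℝ} (hs : -(Module.finrank ℝ E : ℝ) < s) :
    IntegrableOn (fun x : E ↦ ‖x‖ ^ s) (ball 0 1) μ := by
  have hd : (-1 : ℝ) < s + (Module.finrank ℝ E - 1 : ℕ) := by
    rw [Nat.cast_pred Module.finrank_pos]; linarith
  rw [integrableOn_fun_norm_addHaar μ (f := (· ^ s))]
  refine ((intervalIntegral.intervalIntegrable_rpow' hd).1.mono_set Ioo_subset_Ioc_self).congr_fun
    (fun r hr ↦ ?_) measurableSet_Ioo
  simp only [rpow_add_natCast hr.1.ne', smul_eq_mul, mul_comm]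

lemma integrableOn_compl_ball_rpow_norm {s : ℝ} (hs : s < -(Module.finrank ℝ E : ℝ)) :
    IntegrableOn (fun x : E ↦ ‖x‖ ^ s) (ball 0 1)ᶜ μ := by
  have hd : s + (Module.finrank ℝ E - 1 : ℕ) < -1 := by
    rw [Nat.cast_pred Module.finrank_pos]; linarith
  have hind : (ball (0 : E) 1)ᶜ.indicator (‖·‖ ^ s) = fun x ↦ (Ici 1).indicator (· ^ s) ‖x‖ := by
    ext x; simp [indicator]
  have hradial : IntegrableOn (fun y : ℝ ↦ y ^ (Module.finrank ℝ E - 1) • y ^ s) (Ici 1) := by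
    rw [integrableOn_Ici_iff_integrableOn_Ioi]
    refine (integrableOn_Ioi_rpow_of_lt hd one_pos).congr_fun (fun y hy ↦ ?_) measurableSet_Ioi
    simp only [rpow_add_natCast (one_pos.trans hy).ne', smul_eq_mul, mul_comm]
  rw [← integrable_indicator_iff measurableSet_ball.compl, hind, integrable_fun_norm_addHaar]
  simp_rw [← indicator_smul_apply (Ici 1) (fun y : ℝ ↦ y ^ (Module.finrank ℝ E - 1))]
  exact ((integrable_indicator_iff measurableSet_Ici).2 hradial).integrableOn

lemma setIntegral_ball_rpow_norm {s : ℝ} (hs : -(Module.finrank ℝ E : ℝ) < s) :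
    ∫ x in ball (0 : E) 1, ‖x‖ ^ s ∂μ =
      Module.finrank ℝ E * μ.real (ball 0 1) / (Module.finrank ℝ E + s) := by
  have hd : (-1 : ℝ) < s + (Module.finrank ℝ E - 1 : ℕ) := by
    rw [Nat.cast_pred Module.finrank_pos]; linarith
  have hind : (ball (0 : E) 1).indicator (‖·‖ ^ s) = fun x ↦ (Iio 1).indicator (· ^ s) ‖x‖ := by
    ext x; simp [indicator]
  have hradial : ∫ y in Ioi (0 : ℝ), y ^ (Module.finrank ℝ E - 1) • (Iio 1).indicator (· ^ s) y
      = 1 / (Module.finrank ℝ E + s) := by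
    simp_rw [← indicator_smul_apply (Iio 1) (fun y : ℝ ↦ y ^ (Module.finrank ℝ E - 1))]
    rw [setIntegral_indicator measurableSet_Iio, Ioi_inter_Iio,
      setIntegral_congr_fun measurableSet_Ioo (g := fun y ↦ y ^ (s + (Module.finrank ℝ E - 1 : ℕ)))
        fun y hy ↦ by simp only [rpow_add_natCast hy.1.ne', smul_eq_mul, mul_comm],
      ← integral_Ioc_eq_integral_Ioo, ← intervalIntegral.integral_of_le zero_le_one,
      integral_rpow (Or.inl hd), Nat.cast_pred Module.finrank_pos, one_rpow,
      zero_rpow (by linarith)]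
    ring_nf
  rw [← integral_indicator measurableSet_ball, hind, integral_fun_norm_addHaar, hradial]
  simp only [nsmul_eq_mul, smul_eq_mul]
  ring

end Radial

lemma abs_one_sub_cos_sub_sq_div_two_le {t : ℝ} (ht : |t| ≤ 1) :
    |1 - cos t - t ^ 2 / 2| ≤ t ^ 4 :=
  calc |1 - cos t - t ^ 2 / 2| = |cos t - (1 - t ^ 2 / 2)| := by rw [abs_sub_comm]; ring_nf
    _ ≤ |t| ^ 4 * (5 / 96) := cos_bound ht
    _ ≤ t ^ 4 := by rw [Even.pow_abs ⟨2, rfl⟩]; linarith [show 0 ≤ t ^ 4 by positivity]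

lemma tendsto_inv_div_one_sub_of_abs_sub_le {f : ℝ → ℝ} {A C : ℝ} (hA : A ≠ 0)
    (h : ∀ᶠ α in 𝓝[<] 1, |f α - A / (1 - α)| ≤ C) :
    Tendsto (fun α ↦ (f α)⁻¹ / (1 - α)) (𝓝[<] 1) (𝓝 A⁻¹) := by
  have hC : Tendsto (fun α : ℝ ↦ (1 - α) * C) (𝓝[<] 1) (𝓝 0) :=
    tendsto_nhdsWithin_of_tendsto_nhds <| by
      simpa using (show Continuous fun α : ℝ ↦ (1 - α) * C by fun_prop).tendsto 1
  have hlin : Tendsto (fun α ↦ (1 - α) * f α) (𝓝[<] 1) (𝓝 A) := by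
    rw [tendsto_iff_norm_sub_tendsto_zero]
    refine squeeze_zero' (.of_forall fun _ ↦ norm_nonneg _) ?_ hC
    filter_upwards [h, self_mem_nhdsWithin] with α hα (hα1 : α < 1)
    have h1α : 0 < 1 - α := sub_pos.2 hα1
    have hfactor : (1 - α) * f α - A = (1 - α) * (f α - A / (1 - α)) := by field_simp
    calc ‖(1 - α) * f α - A‖ = (1 - α) * |f α - A / (1 - α)| := by
          rw [Real.norm_eq_abs, hfactor, abs_mul, abs_of_pos h1α]
      _ ≤ (1 - α) * C := mul_le_mul_of_nonneg_left hα h1α.le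
  convert hlin.inv₀ hA using 2 with α
  rw [mul_inv, div_eq_mul_inv, mul_comm]

section Euclidean

variable {N : ℕ}

lemma setIntegral_ball_apply_norm_eq (F : ℝ → ℝ → ℝ) (i j : Fin N) :
    ∫ z in ball (0 : EuclideanSpace ℝ (Fin N)) 1, F (z i) ‖z‖ =
      ∫ z in ball (0 : EuclideanSpace ℝ (Fin N)) 1, F (z j) ‖z‖ := by
  let T := LinearIsometryEquiv.piLpCongrLeft 2 ℝ ℝ (Equiv.swap i j)
  have hT : T ⁻¹' ball 0 1 = ball 0 1 := by ext z; simp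
  rw [← T.measurePreserving.setIntegral_preimage_emb T.toHomeomorph.measurableEmbedding, hT]
  congr with z
  simp [T]

lemma sq_apply_div_rpow_norm_le (z : EuclideanSpace ℝ (Fin N)) (i : Fin N) (p : ℝ) :
    z i ^ 2 / ‖z‖ ^ p ≤ ‖z‖ ^ (2 - p) := by
  rcases eq_or_ne z 0 with rfl | hz
  · simp [rpow_nonneg]
  calc z i ^ 2 / ‖z‖ ^ p ≤ ‖z‖ ^ 2 / ‖z‖ ^ p := by
        refine div_le_div_of_nonneg_right ?_ (by positivity)
        simpa using pow_le_pow_left₀ (norm_nonneg _) (PiLp.norm_apply_le z i) 2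
    _ = ‖z‖ ^ (2 - p) := by rw [rpow_sub (norm_pos_iff.2 hz), rpow_two]

lemma integrableOn_ball_sq_apply_div_rpow_norm (i : Fin N) {p : ℝ} (hp : p < N + 2) :
    IntegrableOn (fun z : EuclideanSpace ℝ (Fin N) ↦ z i ^ 2 / ‖z‖ ^ p) (ball 0 1) := by
  have : NeZero N := .of_pos i.pos
  refine (integrableOn_ball_rpow_norm volume (s := 2 - p) (by simp; linarith)).mono'
    (Measurable.aestronglyMeasurable (by fun_prop)) (ae_of_all _ fun z ↦ ?_)
  rw [Real.norm_of_nonneg (by positivity)]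
  exact sq_apply_div_rpow_norm_le z i p

lemma setIntegral_ball_sq_apply_div_rpow_norm (i : Fin N) {p : ℝ} (hp : p < N + 2) :
    ∫ z in ball (0 : EuclideanSpace ℝ (Fin N)) 1, z i ^ 2 / ‖z‖ ^ p =
      volume.real (ball (0 : EuclideanSpace ℝ (Fin N)) 1) / (N + 2 - p) := by
  have : NeZero N := .of_pos i.pos
  have hsum : ∑ j, ∫ z in ball (0 : EuclideanSpace ℝ (Fin N)) 1, z j ^ 2 / ‖z‖ ^ p =
      ∫ z in ball (0 : EuclideanSpace ℝ (Fin N)) 1, ‖z‖ ^ (2 - p) := by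
    rw [← integral_finsetSum _ fun j _ ↦ integrableOn_ball_sq_apply_div_rpow_norm j hp]
    refine integral_congr_ae (ae_restrict_of_ae ?_)
    filter_upwards [volume.ae_ne 0] with z hz
    rw [← Finset.sum_div, ← EuclideanSpace.real_norm_sq_eq, rpow_sub (norm_pos_iff.2 hz), rpow_two]
  rw [Finset.sum_congr rfl fun j _ ↦ setIntegral_ball_apply_norm_eq (· ^ 2 / · ^ p) j i,
    Finset.sum_const, Finset.card_univ, Fintype.card_fin, nsmul_eq_mul,
    setIntegral_ball_rpow_norm volume (by simp; linarith), finrank_euclideanSpace_fin] at hsum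
  have hN : (N : ℝ) ≠ 0 := NeZero.ne _
  field_simp at hsum ⊢
  linear_combination hsum

noncomputable def cosRemainderMajorant (N : ℕ) (z : EuclideanSpace ℝ (Fin N)) : ℝ :=
  (ball 0 1).indicator (‖·‖ ^ (2 - N : ℝ)) z +
    (ball 0 1)ᶜ.indicator (fun z ↦ 2 * ‖z‖ ^ (-(N : ℝ) - 1)) z

lemma integrable_cosRemainderMajorant (N : ℕ) [NeZero N] : Integrable (cosRemainderMajorant N) :=
  ((integrable_indicator_iff measurableSet_ball).2
      (integrableOn_ball_rpow_norm volume (by simp))).add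
    ((integrable_indicator_iff measurableSet_ball.compl).2
      ((integrableOn_compl_ball_rpow_norm volume (by simp)).const_mul 2))

lemma abs_one_sub_cos_div_sub_indicator_le (i : Fin N) {α : ℝ} (hα : α ∈ Icc (1 / 2 : ℝ) 1)
    (z : EuclideanSpace ℝ (Fin N)) :
    |(1 - cos (z i)) / ‖z‖ ^ ((N : ℝ) + 2 * α) -
        (ball 0 1).indicator (fun z ↦ z i ^ 2 / ‖z‖ ^ ((N : ℝ) + 2 * α) / 2) z| ≤
      cosRemainderMajorant N z := by
  rcases eq_or_ne z 0 with rfl | hz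
  · simp [cosRemainderMajorant, rpow_nonneg]
  have hr : 0 < ‖z‖ := norm_pos_iff.2 hz
  have hzi : |z i| ≤ ‖z‖ := PiLp.norm_apply_le z i
  by_cases hb : z ∈ ball 0 1
  · have hr1 : ‖z‖ < 1 := mem_ball_zero_iff.1 hb
    simp only [cosRemainderMajorant, indicator_of_mem hb,
      indicator_of_notMem (notMem_compl_iff.2 hb), add_zero]
    calc _ = |1 - cos (z i) - z i ^ 2 / 2| / ‖z‖ ^ ((N : ℝ) + 2 * α) := by
          rw [← abs_of_pos (rpow_pos_of_pos hr _), ← abs_div, abs_of_pos (rpow_pos_of_pos hr _)]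
          ring_nf
      _ ≤ ‖z‖ ^ 4 / ‖z‖ ^ ((N : ℝ) + 2 * α) := by
          gcongr
          exact (abs_one_sub_cos_sub_sq_div_two_le (hzi.trans hr1.le)).trans
            (by simpa [Even.pow_abs ⟨2, rfl⟩] using pow_le_pow_left₀ (abs_nonneg _) hzi 4)
      _ = ‖z‖ ^ (4 - ((N : ℝ) + 2 * α)) := by rw [rpow_sub hr, rpow_ofNat]
      _ ≤ ‖z‖ ^ (2 - N : ℝ) := rpow_le_rpow_of_exponent_ge hr hr1.le (by linarith [hα.2])
  · have hr1 : 1 ≤ ‖z‖ := by simpa using hb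
    simp only [cosRemainderMajorant, indicator_of_notMem hb, indicator_of_mem (mem_compl hb),
      zero_add, sub_zero]
    calc _ = (1 - cos (z i)) / ‖z‖ ^ ((N : ℝ) + 2 * α) :=
          abs_of_nonneg (div_nonneg (by linarith [cos_le_one (z i)]) (by positivity))
      _ ≤ 2 / ‖z‖ ^ ((N : ℝ) + 2 * α) := by gcongr; linarith [neg_one_le_cos (z i)]
      _ = 2 * ‖z‖ ^ (-((N : ℝ) + 2 * α)) := by rw [rpow_neg hr.le, div_eq_mul_inv]
      _ ≤ 2 * ‖z‖ ^ (-(N : ℝ) - 1) := by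
          gcongr
          linarith [hα.1]

lemma abs_integral_one_sub_cos_div_sub_le (i : Fin N) {α : ℝ} (hα : α ∈ Ico (1 / 2 : ℝ) 1) :
    |(∫ z : EuclideanSpace ℝ (Fin N), (1 - cos (z i)) / ‖z‖ ^ ((N : ℝ) + 2 * α)) -
        volume.real (ball (0 : EuclideanSpace ℝ (Fin N)) 1) / (4 * (1 - α))| ≤
      ∫ z, cosRemainderMajorant N z := by
  have : NeZero N := .of_pos i.pos
  have hp : (N : ℝ) + 2 * α < N + 2 := by linarith [hα.2]
  set main : EuclideanSpace ℝ (Fin N) → ℝ := (ball (0 : EuclideanSpace ℝ (Fin N)) 1).indicator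
    (fun z ↦ z i ^ 2 / ‖z‖ ^ ((N : ℝ) + 2 * α) / 2)
  have hmain : Integrable main := (integrable_indicator_iff measurableSet_ball).2
    ((integrableOn_ball_sq_apply_div_rpow_norm i hp).div_const 2)
  have hmain_eq : ∫ z, main z = volume.real (ball (0 : EuclideanSpace ℝ (Fin N)) 1) /
      (4 * (1 - α)) := by
    rw [integral_indicator measurableSet_ball, integral_div,
      setIntegral_ball_sq_apply_div_rpow_norm i hp, div_div]
    ring
  have hbound := abs_one_sub_cos_div_sub_indicator_le i (Ico_subset_Icc_self hα)
  have hdiff : Integrable fun z ↦ (1 - cos (z i)) / ‖z‖ ^ ((N : ℝ) + 2 * α) - main z :=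
    (integrable_cosRemainderMajorant N).mono' (by measurability) (ae_of_all _ hbound)
  have hint : Integrable fun z : EuclideanSpace ℝ (Fin N) ↦
      (1 - cos (z i)) / ‖z‖ ^ ((N : ℝ) + 2 * α) :=
    (hdiff.add hmain).congr (.of_forall fun z ↦ sub_add_cancel _ _)
  rw [← hmain_eq, ← integral_sub hint hmain, ← Real.norm_eq_abs]
  exact norm_integral_le_of_norm_le (integrable_cosRemainderMajorant N) (ae_of_all _ hbound)

end Euclidean

theorem stmt3 (N : ℕ) (hN : 2 ≤ N) :
    Tendsto
      (fun α : ℝ =>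
        (∫ z : EuclideanSpace ℝ (Fin N),
            (1 - Real.cos (z ⟨0, by omega⟩)) / ‖z‖ ^ ((N : ℝ) + 2 * α))⁻¹ / (1 - α))
      (nhdsWithin 1 (Set.Iio 1))
      (nhds (4 * (N : ℝ) /
        ((N : ℝ) * (volume (Metric.ball (0 : EuclideanSpace ℝ (Fin N)) 1)).toReal))) := by
  have hV : 0 < volume.real (ball (0 : EuclideanSpace ℝ (Fin N)) 1) :=
    ENNReal.toReal_pos (measure_ball_pos _ _ one_pos).ne' measure_ball_lt_top.ne
  have hest : ∀ᶠ α in 𝓝[<] 1,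
      |(∫ z : EuclideanSpace ℝ (Fin N), (1 - cos (z ⟨0, by omega⟩)) / ‖z‖ ^ ((N : ℝ) + 2 * α)) -
        volume.real (ball (0 : EuclideanSpace ℝ (Fin N)) 1) / 4 / (1 - α)| ≤
      ∫ z, cosRemainderMajorant N z :=
    eventually_of_mem (Ico_mem_nhdsLT (by norm_num : (1 / 2 : ℝ) < 1)) fun α hα ↦ by
      simpa only [div_div] using abs_integral_one_sub_cos_div_sub_le _ hα
  convert tendsto_inv_div_one_sub_of_abs_sub_le (div_ne_zero hV.ne' four_ne_zero) hest using 2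
  rw [← measureReal_def]
  field_simp
end

section
/- Let N ≥ 2, α ∈ (0,1), and let a measurable function h : ℝ^N → [0,∞) satisfy h(x) ≥ c·ρ(x)^α·|x|^{-N}·∫_{B₁(e_N) ∩ B_{|x|/4}(0)} ρ(y)^α/|y + s e_N|^{N+2α} dy for all x ∈ B₁(e_N), where ρ(y) = dist(y, ∂B₁(e_N)), c > 0, and s ∈ (0,1). Then for each fixed x ∈ B₁(e_N), lim_{s→0⁺} ∫_{B₁(e_N) ∩ B_{|x|/4}(0)} ρ(y)^α/|y + s e_N|^{N+2α} dy = +∞. -/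
open MeasureTheory Metric Filter Real Set Module Topology

/-! For small `s` the ball `B(s e, s/2)` lies in `B₁(e) ∩ B_r(0)`, and on it `ρ ≥ s/2` and
`‖y + s e‖ ≤ 5s/2`. Since its volume is a constant times `s^N`, the integral is at least a constant
times `s^α · s^(-p) · s^N = s^(α + N - p)`, which tends to `∞` as `s → 0⁺` because `p > N + α`. -/

section Geometry

variable {E : Type*} [NormedAddCommGroup E] [NormedSpace ℝ E] {e y : E} {s : ℝ}

lemma sub_dist_le_infDist_sphere [Nontrivial E] {c : E} {r : ℝ} (hr : 0 ≤ r) (y : E) :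
    r - dist y c ≤ infDist y (sphere c r) := by
  rw [le_infDist (NormedSpace.sphere_nonempty.mpr hr)]
  intro z hz
  have := dist_triangle c y z
  rw [mem_sphere, dist_comm] at hz
  rw [dist_comm c y] at this
  linarith

lemma le_norm_add_smul_of_mem_closedBall (he : ‖e‖ = 1) (hs : 0 ≤ s)
    (hy : y ∈ closedBall e 1) : s ≤ ‖y + s • e‖ := by
  have hsum : y + s • e = (1 + s) • e - (e - y) := by module
  have hnorm : ‖(1 + s) • e‖ = 1 + s := by
    rw [norm_smul, he, mul_one, Real.norm_of_nonneg (by linarith)]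
  rw [mem_closedBall, dist_eq_norm, ← norm_neg, neg_sub] at hy
  rw [hsum]
  linarith [norm_sub_norm_le ((1 + s) • e) (e - y)]

variable (he : ‖e‖ = 1) (hy : y ∈ ball (s • e) (s / 2))
include he hy

lemma dist_lt_of_mem_ball_smul (hs : s ≤ 1) : dist y e < 1 - s / 2 := by
  have hse : dist (s • e) e = 1 - s := by
    rw [dist_eq_norm, show s • e - e = (s - 1) • e by module, norm_smul, he, mul_one,
      Real.norm_of_nonpos (by linarith)]
    ring
  linarith [dist_triangle y (s • e) e, mem_ball.mp hy]

lemma norm_lt_of_mem_ball_smul (hs : 0 ≤ s) : ‖y‖ < 3 * s / 2 := by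
  have hse : ‖s • e‖ = s := by rw [norm_smul, he, mul_one, Real.norm_of_nonneg hs]
  rw [mem_ball, dist_eq_norm] at hy
  linarith [norm_le_norm_add_norm_sub' y (s • e)]

lemma norm_add_smul_lt_of_mem_ball_smul (hs : 0 ≤ s) : ‖y + s • e‖ < 5 * s / 2 := by
  have hse : ‖(2 * s) • e‖ = 2 * s := by
    rw [norm_smul, he, mul_one, Real.norm_of_nonneg (by linarith)]
  have hsum : y + s • e = (y - s • e) + (2 * s) • e := by module
  rw [mem_ball, dist_eq_norm] at hy
  rw [hsum]
  linarith [norm_add_le (y - s • e) ((2 * s) • e)]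

end Geometry

section Kernel

variable {E : Type*} [NormedAddCommGroup E] [NormedSpace ℝ E] {e y : E} {α p s : ℝ}

/-- The integrand `ρ(y)^α / ‖y + s e‖^p`, with `ρ` the distance to the sphere `∂B₁(e)`. -/
noncomputable def boundaryKernel (e : E) (α p s : ℝ) (y : E) : ℝ :=
  infDist y (sphere e 1) ^ α / ‖y + s • e‖ ^ p

lemma boundaryKernel_nonneg : 0 ≤ boundaryKernel e α p s y :=
  div_nonneg (rpow_nonneg infDist_nonneg _) (rpow_nonneg (norm_nonneg _) _)

lemma continuousOn_boundaryKernel (he : ‖e‖ = 1) (hα : 0 ≤ α) (hs : 0 < s) :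
    ContinuousOn (boundaryKernel e α p s) (closedBall e 1) := by
  have hden : ∀ y ∈ closedBall e 1, 0 < ‖y + s • e‖ := fun y hy =>
    hs.trans_le (le_norm_add_smul_of_mem_closedBall he hs.le hy)
  refine ContinuousOn.div ?_ ?_ fun y hy => (rpow_pos_of_pos (hden y hy) p).ne'
  · exact ((continuous_infDist_pt _).rpow_const fun _ => Or.inr hα).continuousOn
  · exact (continuous_id.add continuous_const).norm.continuousOn.rpow_const
      fun y hy => Or.inl (hden y hy).ne'

lemma boundaryKernel_ge_of_mem_ball_smul (he : ‖e‖ = 1) (hα : 0 ≤ α) (hp : 0 ≤ p) (hs : 0 < s)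
    (hs1 : s ≤ 1) (hy : y ∈ ball (s • e) (s / 2)) :
    (s / 2) ^ α / (5 * s / 2) ^ p ≤ boundaryKernel e α p s y := by
  have : Nontrivial E := nontrivial_of_ne e 0 (by simp [← norm_ne_zero_iff, he])
  have hdist := dist_lt_of_mem_ball_smul he hy hs1
  have hρ : s / 2 ≤ infDist y (sphere e 1) := by
    linarith [sub_dist_le_infDist_sphere (E := E) (c := e) zero_le_one y]
  have hy' : y ∈ closedBall e 1 := mem_closedBall.mpr (by linarith)
  have hden : 0 < ‖y + s • e‖ := hs.trans_le (le_norm_add_smul_of_mem_closedBall he hs.le hy')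
  exact div_le_div₀ (rpow_nonneg infDist_nonneg _) (rpow_le_rpow (by positivity) hρ hα)
    (rpow_pos_of_pos hden p)
    (rpow_le_rpow hden.le (norm_add_smul_lt_of_mem_ball_smul he hy hs.le).le hp)

end Kernel

lemma tendsto_rpow_div_rpow_mul_pow_nhdsGT_zero {α p m : ℝ} {d : ℕ} (hp : α + d < p)
    (hm : 0 < m) :
    Tendsto (fun s : ℝ => (s / 2) ^ α / (5 * s / 2) ^ p * ((s / 2) ^ d * m)) (𝓝[>] 0) atTop := by
  have hC : 0 < (1 / 2 : ℝ) ^ α / (5 / 2) ^ p * ((1 / 2) ^ d * m) := by positivity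
  refine ((tendsto_rpow_neg_nhdsGT_zero (by linarith : α + d - p < 0)).const_mul_atTop
    hC).congr' ?_
  filter_upwards [self_mem_nhdsWithin] with s (hs : 0 < s)
  rw [show s / 2 = 1 / 2 * s by ring, show 5 * s / 2 = 5 / 2 * s by ring,
    mul_rpow (by norm_num) hs.le, mul_rpow (by norm_num) hs.le, mul_pow, ← rpow_natCast s,
    rpow_sub hs, rpow_add hs]
  field_simp

section Integral

variable {E : Type*} [NormedAddCommGroup E] [NormedSpace ℝ E] [FiniteDimensional ℝ E]
  [MeasurableSpace E] [BorelSpace E] (μ : Measure E) [μ.IsAddHaarMeasure]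
  {e : E} {α p s : ℝ} {S : Set E}

lemma integrableOn_boundaryKernel (he : ‖e‖ = 1) (hα : 0 ≤ α) (hs : 0 < s)
    (hS : S ⊆ closedBall e 1) : IntegrableOn (boundaryKernel e α p s) S μ :=
  ((continuousOn_boundaryKernel he hα hs).integrableOn_compact (isCompact_closedBall e 1)).mono_set
    hS

lemma setIntegral_boundaryKernel_ge (he : ‖e‖ = 1) (hα : 0 ≤ α) (hp : 0 ≤ p) (hs : 0 < s)
    (hs1 : s ≤ 1) (hS : S ⊆ closedBall e 1) (hball : ball (s • e) (s / 2) ⊆ S) :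
    (s / 2) ^ α / (5 * s / 2) ^ p * ((s / 2) ^ finrank ℝ E * μ.real (ball 0 1)) ≤
      ∫ y in S, boundaryKernel e α p s y ∂μ := by
  have hvol : μ.real (ball (s • e) (s / 2)) = (s / 2) ^ finrank ℝ E * μ.real (ball 0 1) := by
    rw [measureReal_def, Measure.addHaar_ball_of_pos μ _ (by positivity), ENNReal.toReal_mul,
      ENNReal.toReal_ofReal (by positivity), measureReal_def]
  calc _ = (s / 2) ^ α / (5 * s / 2) ^ p * μ.real (ball (s • e) (s / 2)) := by rw [hvol]
    _ ≤ ∫ y in ball (s • e) (s / 2), boundaryKernel e α p s y ∂μ :=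
      setIntegral_ge_of_const_le_real measurableSet_ball measure_ball_lt_top.ne
        (fun _ hy => boundaryKernel_ge_of_mem_ball_smul he hα hp hs hs1 hy)
        (integrableOn_boundaryKernel μ he hα hs (hball.trans hS))
    _ ≤ ∫ y in S, boundaryKernel e α p s y ∂μ :=
      setIntegral_mono_set (integrableOn_boundaryKernel μ he hα hs hS)
        (Eventually.of_forall fun _ => boundaryKernel_nonneg) hball.eventuallyLE

end Integral

theorem tendsto_setIntegral_boundaryKernel_atTop {E : Type*} [NormedAddCommGroup E]
    [NormedSpace ℝ E] [FiniteDimensional ℝ E] [MeasurableSpace E] [BorelSpace E]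
    (μ : Measure E) [μ.IsAddHaarMeasure] {e : E} {α p r : ℝ} (he : ‖e‖ = 1) (hα : 0 ≤ α)
    (hp : α + finrank ℝ E < p) (hr : 0 < r) :
    Tendsto (fun s => ∫ y in ball e 1 ∩ ball 0 r, boundaryKernel e α p s y ∂μ) (𝓝[>] 0) atTop := by
  have hm : 0 < μ.real (ball (0 : E) 1) :=
    ENNReal.toReal_pos (measure_ball_pos μ 0 one_pos).ne' measure_ball_lt_top.ne
  have hp0 : 0 ≤ p := by linarith [(finrank ℝ E).cast_nonneg (α := ℝ)]
  refine tendsto_atTop_mono' _ ?_ (tendsto_rpow_div_rpow_mul_pow_nhdsGT_zero hp hm)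
  filter_upwards [Ioo_mem_nhdsGT (by positivity : (0 : ℝ) < min 1 (2 * r / 3))]
    with s ⟨hs, hs_lt⟩
  have hs1 : s ≤ 1 := hs_lt.le.trans (min_le_left _ _)
  refine setIntegral_boundaryKernel_ge μ he hα hp0 hs hs1
    (inter_subset_left.trans ball_subset_closedBall) fun y hy => ⟨?_, ?_⟩
  · exact mem_ball.mpr (by linarith [dist_lt_of_mem_ball_smul he hy hs1])
  · exact mem_ball_zero_iff.mpr
      (by linarith [norm_lt_of_mem_ball_smul he hy hs.le, hs_lt.trans_le (min_le_right _ _)])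

theorem stmt12 (N : ℕ) (hN : 2 ≤ N) (α : ℝ) (hα : α ∈ Set.Ioo (0:ℝ) 1)
    (eN : EuclideanSpace ℝ (Fin N)) (heN : eN = EuclideanSpace.single ⟨N - 1, by omega⟩ 1)
    (ρ : EuclideanSpace ℝ (Fin N) → ℝ)
    (hρ : ∀ y, ρ y = Metric.infDist y (Metric.sphere eN 1))
    (x : EuclideanSpace ℝ (Fin N)) (hx : x ∈ Metric.ball eN 1) :
    Tendsto
      (fun s : ℝ =>
        ∫ y in Metric.ball eN 1 ∩ Metric.ball (0 : EuclideanSpace ℝ (Fin N)) (‖x‖ / 4),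
          ρ y ^ α / ‖y + s • eN‖ ^ ((N : ℝ) + 2 * α))
      (nhdsWithin 0 (Set.Ioi 0)) atTop := by
  have he : ‖eN‖ = 1 := by simp [heN]
  have hx0 : x ≠ 0 := by
    rintro rfl
    simp [he] at hx
  simp only [hρ]
  exact tendsto_setIntegral_boundaryKernel_atTop volume he hα.1.le
    (by rw [finrank_euclideanSpace_fin]; linarith [hα.1]) (by positivity)
end
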